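/- For every fixed positive integer k, A_μ = A_{μ^{*k}}; that is, g satisfies lim_n μ^{*n}(g)/μ^{*n}(e) = 1 if and only if lim_n (μ^{*k})^{*n}(g)/(μ^{*k})^{*n}(e) = lim_n μ^{*kn}(g)/μ^{*kn}(e) = 1. -/

import Mathlib

open Filter Topology
open scoped Classical

/-- Convolution of two real-valued functions on a discrete group. -/
noncomputable def conv {G : Type*} [Group G] (μ τ : G → ℝ) : G → ℝ :=
  fun y => ∑' x : G, μ x * τ (x⁻¹ * y)

/-- `n`-fold convolution power, with `μ^{*0}` the Dirac mass at the identity. -/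
noncomputable def convPow {G : Type*} [Group G] (μ : G → ℝ) : ℕ → G → ℝ
  | 0 => fun x => if x = 1 then 1 else 0
  | n + 1 => conv (convPow μ n) μ

/-- `μ` is a probability measure on the discrete group `G`. -/
def IsProb {G : Type*} [Group G] (μ : G → ℝ) : Prop :=
  (∀ x, 0 ≤ μ x) ∧ ∑' x : G, μ x = 1

/-- `μ` is symmetric. -/
def MeasSymm {G : Type*} [Group G] (μ : G → ℝ) : Prop := ∀ x, μ x⁻¹ = μ x

/-- `μ` is aperiodic: `gcd { n ≥ 1 | μ^{*n}(e) > 0 } = 1`. -/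
def IsAperiodic {G : Type*} [Group G] (μ : G → ℝ) : Prop :=
  ∀ d : ℕ, (∀ n : ℕ, 1 ≤ n → 0 < convPow μ n 1 → d ∣ n) → d = 1

/-- The support of `μ` generates `G`. -/
def GeneratingSupport {G : Type*} [Group G] (μ : G → ℝ) : Prop :=
  Subgroup.closure {x : G | 0 < μ x} = ⊤

/-- The set `A_μ = { g | μ^{*n}(g)/μ^{*n}(e) → 1 }`. -/
def Amu {G : Type*} [Group G] (μ : G → ℝ) : Set G :=
  {g | Tendsto (fun n => convPow μ n g / convPow μ n 1) atTop (𝓝 1)}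

/-- ℓ² inner product. -/
noncomputable def l2inner {G : Type*} (f h : G → ℝ) : ℝ := ∑' x : G, f x * h x

/-- ℓ² norm. -/
noncomputable def l2norm {G : Type*} (f : G → ℝ) : ℝ :=
  Real.sqrt (∑' x : G, (f x) ^ 2)

/-- Left translation: `(g · f)(x) = f (g⁻¹ x)`. -/
def ltrans {G : Type*} [Group G] (g : G) (f : G → ℝ) : G → ℝ := fun x => f (g⁻¹ * x)

/-- The normalized convolution powers `ξ_n = μ^{*n}/‖μ^{*n}‖₂`. -/
noncomputable def xi {G : Type*} [Group G] (μ : G → ℝ) (n : ℕ) : G → ℝ :=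
  fun x => convPow μ n x / l2norm (convPow μ n)

/-- Reiter-type characterization of amenability: a sequence of almost-invariant
unit vectors in `ℓ²(K)`. -/
def ReiterAmenable (K : Type*) [Group K] : Prop :=
  ∃ ψ : ℕ → K → ℝ, (∀ n, ∑' x : K, (ψ n x) ^ 2 = 1) ∧
    ∀ k : K, Tendsto
      (fun n => Real.sqrt (∑' x : K, (ψ n (k⁻¹ * x) - ψ n x) ^ 2)) atTop (𝓝 0)


/-!
Write `E n = μ^{*2n}(e) = ‖μ^{*n}‖₂²` and `Q n = ‖g · μ^{*n} - μ^{*n}‖₂²`. Expanding the square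
gives `Q n = 2 (E n - μ^{*2n}(g))`, so along even times `g ∈ A_μ` says exactly `Q n / E n → 0`.
Odd times come for free: by Cauchy–Schwarz `(μ^{*2n+1}(g) - μ^{*2n+1}(e))² ≤ E n · Q n`, while
aperiodicity gives `μ^{*2n+1}(e) ≥ c · E n` eventually. Replacing `μ` by `μ^{*k}` replaces `n` by
`k n`, and the subsequence `k n` controls the whole sequence because `Q` is nonincreasing
(convolution by `μ` contracts `ℓ²`) while `E (n + 1) ≥ μ^{*2}(e) · E n`.
-/

theorem tsum_sq_le_tsum_mul_tsum_of_sq_le_mul {ι : Type*} {r f g : ι → ℝ}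
    (hf : ∀ i, 0 ≤ f i) (hg : ∀ i, 0 ≤ g i) (hfs : Summable f) (hgs : Summable g)
    (hr : ∀ i, r i ^ 2 ≤ f i * g i) :
    (∑' i, r i) ^ 2 ≤ (∑' i, f i) * ∑' i, g i := by
  by_cases hrs : Summable r
  · refine le_of_tendsto ((continuous_pow 2).tendsto _ |>.comp hrs.hasSum)
      (Eventually.of_forall fun s => ?_)
    calc (∑ i ∈ s, r i) ^ 2 ≤ (∑ i ∈ s, f i) * ∑ i ∈ s, g i :=
          Finset.sum_sq_le_sum_mul_sum_of_sq_le_mul s (fun i _ => hf i) (fun i _ => hg i)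
            (fun i _ => hr i)
      _ ≤ (∑' i, f i) * ∑' i, g i :=
          mul_le_mul (hfs.sum_le_tsum s fun i _ => hf i) (hgs.sum_le_tsum s fun i _ => hg i)
            (Finset.sum_nonneg fun i _ => hg i) (tsum_nonneg hf)
  · rw [tsum_eq_zero_of_not_summable hrs, sq, zero_mul]
    exact mul_nonneg (tsum_nonneg hf) (tsum_nonneg hg)

theorem Summable.mul_of_nonneg_of_le_one {ι : Type*} {f w : ι → ℝ} (hfs : Summable f)
    (hf : ∀ i, 0 ≤ f i) (hw : ∀ i, 0 ≤ w i) (hw1 : ∀ i, w i ≤ 1) :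
    Summable fun i => f i * w i :=
  hfs.of_nonneg_of_le (fun i => mul_nonneg (hf i) (hw i))
    fun i => mul_le_of_le_one_right (hf i) (hw1 i)

section Convolution

variable {G : Type*} [Group G]

def shearEquiv (G : Type*) [Group G] : G × G ≃ G × G where
  toFun p := (p.1 * p.2, p.1)
  invFun q := (q.2, q.2⁻¹ * q.1)
  left_inv p := by simp
  right_inv q := by simp

theorem hasSum_conv {f g : G → ℝ} (hf : ∀ x, 0 ≤ f x) (hg : ∀ x, 0 ≤ g x)
    (hfs : Summable f) (hgs : Summable g) :
    HasSum (conv f g) ((∑' x, f x) * ∑' x, g x) := by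
  have hprod : Summable fun q : G × G => f q.1 * g q.2 := hfs.mul_of_nonneg hgs hf hg
  have hF : Summable fun p : G × G => f p.2 * g (p.2⁻¹ * p.1) := by
    rw [← (shearEquiv G).summable_iff]
    simpa [shearEquiv, Function.comp_def] using hprod
  have htot : ∑' p : G × G, f p.2 * g (p.2⁻¹ * p.1) = (∑' x, f x) * ∑' x, g x := by
    rw [← (shearEquiv G).tsum_eq]
    simp only [shearEquiv, Equiv.coe_fn_mk, inv_mul_cancel_left]
    rw [hprod.tsum_prod' hprod.prod_factor]
    simp_rw [tsum_mul_left, tsum_mul_right]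
  exact htot ▸ HasSum.prod_fiberwise hF.hasSum fun y => (hF.prod_factor y).hasSum

theorem IsProb.summable {μ : G → ℝ} (h : IsProb μ) : Summable μ := by
  by_contra hs
  exact zero_ne_one (h.2 ▸ (tsum_eq_zero_of_not_summable hs).symm)

theorem IsProb.le_one {μ : G → ℝ} (h : IsProb μ) (x : G) : μ x ≤ 1 :=
  h.2 ▸ h.summable.le_tsum x fun y _ => h.1 y

theorem IsProb.conv {μ ν : G → ℝ} (hμ : IsProb μ) (hν : IsProb ν) : IsProb (conv μ ν) :=
  ⟨fun _ => tsum_nonneg fun x => mul_nonneg (hμ.1 x) (hν.1 _), by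
    rw [(hasSum_conv hμ.1 hν.1 hμ.summable hν.summable).tsum_eq, hμ.2, hν.2, one_mul]⟩

theorem IsProb.hasSum_inv_mul {μ : G → ℝ} (h : IsProb μ) (y : G) :
    HasSum (fun x => μ (x⁻¹ * y)) 1 := by
  rw [← ((Equiv.inv G).trans (Equiv.mulLeft y)).hasSum_iff, ← h.2]
  convert h.summable.hasSum using 2
  ext x
  simp [mul_assoc]

theorem conv_assoc {f g h : G → ℝ} (hf : IsProb f) (hg : IsProb g) (hh : IsProb h) :
    conv (conv f g) h = conv f (conv g h) := by
  funext y
  set F : G × G → ℝ := fun p => f p.2 * g (p.2⁻¹ * p.1) * h (p.1⁻¹ * y)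
  set H : G × G → ℝ := fun q => f q.1 * (g q.2 * h (q.2⁻¹ * (q.1⁻¹ * y)))
  have hFH : F ∘ shearEquiv G = H := by
    funext q
    simp only [F, H, Function.comp, shearEquiv, Equiv.coe_fn_mk, inv_mul_cancel_left, mul_inv_rev,
      mul_assoc]
  have hH : Summable H :=
    (hf.summable.mul_of_nonneg hg.summable hf.1 hg.1).of_nonneg_of_le
      (fun q => mul_nonneg (hf.1 _) (mul_nonneg (hg.1 _) (hh.1 _))) fun q =>
      mul_le_mul_of_nonneg_left (mul_le_of_le_one_right (hg.1 _) (hh.le_one _)) (hf.1 _)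
  have hF : Summable F := (shearEquiv G).summable_iff.mp (hFH ▸ hH)
  calc conv (conv f g) h y = ∑' x, ∑' z, F (x, z) := tsum_congr fun x => tsum_mul_right.symm
    _ = ∑' p, F p := (hF.tsum_prod' hF.prod_factor).symm
    _ = ∑' q, H q := by rw [← hFH]; exact ((shearEquiv G).tsum_eq F).symm
    _ = ∑' z, ∑' w, H (z, w) := hH.tsum_prod' hH.prod_factor
    _ = conv f (conv g h) y := tsum_congr fun z => by simp only [H, tsum_mul_left]; rfl

end Convolution

section ConvPow

variable {G : Type*} [Group G] {μ : G → ℝ}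

theorem isProb_convPow (h : IsProb μ) (n : ℕ) : IsProb (convPow μ n) := by
  induction n with
  | zero =>
    refine ⟨fun x => ?_, tsum_ite_eq (1 : G) fun _ => (1 : ℝ)⟩
    dsimp only [convPow]; split <;> norm_num
  | succ n ih => exact ih.conv h

theorem convPow_nonneg (h : IsProb μ) (n : ℕ) (x : G) : 0 ≤ convPow μ n x :=
  (isProb_convPow h n).1 x

theorem convPow_le_one (h : IsProb μ) (n : ℕ) (x : G) : convPow μ n x ≤ 1 :=
  (isProb_convPow h n).le_one x

theorem convPow_one (μ : G → ℝ) : convPow μ 1 = μ := by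
  funext y
  show ∑' x : G, (if x = 1 then (1 : ℝ) else 0) * μ (x⁻¹ * y) = μ y
  rw [tsum_eq_single 1 fun x hx => by rw [if_neg hx, zero_mul]]
  simp

theorem conv_convPow_zero (f : G → ℝ) : conv f (convPow μ 0) = f := by
  funext y
  show ∑' x : G, f x * (if x⁻¹ * y = 1 then (1 : ℝ) else 0) = f y
  rw [tsum_eq_single y fun x hx => by rw [if_neg (inv_mul_eq_one.not.mpr hx), mul_zero]]
  simp

theorem convPow_add (h : IsProb μ) (m n : ℕ) :
    convPow μ (m + n) = conv (convPow μ m) (convPow μ n) := by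
  induction n with
  | zero => rw [Nat.add_zero, conv_convPow_zero]
  | succ n ih =>
    show conv (convPow μ (m + n)) μ = conv (convPow μ m) (conv (convPow μ n) μ)
    rw [ih, conv_assoc (isProb_convPow h m) (isProb_convPow h n) h]

theorem convPow_convPow (h : IsProb μ) (k n : ℕ) :
    convPow (convPow μ k) n = convPow μ (k * n) := by
  induction n with
  | zero => rfl
  | succ n ih =>
    show conv (convPow (convPow μ k) n) (convPow μ k) = _
    rw [ih, Nat.mul_succ, convPow_add h]

theorem measSymm_convPow (h : IsProb μ) (hsymm : MeasSymm μ) (n : ℕ) :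
    MeasSymm (convPow μ n) := by
  induction n with
  | zero => intro x; simp only [convPow, inv_eq_one]
  | succ n ih =>
    intro y
    have hcomm : convPow μ (n + 1) = conv μ (convPow μ n) := by
      rw [add_comm, convPow_add h, convPow_one]
    calc convPow μ (n + 1) y⁻¹
        = ∑' z, convPow μ n (y⁻¹ * z) * μ ((y⁻¹ * z)⁻¹ * y⁻¹) :=
          ((Equiv.mulLeft y⁻¹).tsum_eq _).symm
      _ = ∑' z, μ z * convPow μ n (z⁻¹ * y) := tsum_congr fun z => by
          rw [show (y⁻¹ * z)⁻¹ * y⁻¹ = z⁻¹ by group, show y⁻¹ * z = (z⁻¹ * y)⁻¹ by group,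
            hsymm, ih, mul_comm]
      _ = convPow μ (n + 1) y := by rw [hcomm]; rfl

end ConvPow

section Returns

variable {G : Type*} [Group G] {μ : G → ℝ}

theorem hasSum_convPow_mul_convPow (h : IsProb μ) (hsymm : MeasSymm μ) (m n : ℕ) (g : G) :
    HasSum (fun x => convPow μ m x * convPow μ n (g⁻¹ * x)) (convPow μ (m + n) g) := by
  have hs : Summable fun x => convPow μ m x * convPow μ n (g⁻¹ * x) :=
    (isProb_convPow h m).summable.mul_of_nonneg_of_le_one (convPow_nonneg h m)
      (fun _ => convPow_nonneg h n _) fun _ => convPow_le_one h n _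
  convert hs.hasSum using 1
  rw [convPow_add h]
  refine tsum_congr fun x => ?_
  rw [← measSymm_convPow h hsymm n (g⁻¹ * x), mul_inv_rev, inv_inv]

theorem hasSum_convPow_sq (h : IsProb μ) (hsymm : MeasSymm μ) (n : ℕ) :
    HasSum (fun x => convPow μ n x ^ 2) (convPow μ (2 * n) 1) := by
  simpa only [inv_one, one_mul, ← sq, ← two_mul] using hasSum_convPow_mul_convPow h hsymm n n 1

theorem hasSum_ltrans_convPow_sq (h : IsProb μ) (hsymm : MeasSymm μ) (n : ℕ) (g : G) :
    HasSum (fun x => ltrans g (convPow μ n) x ^ 2) (convPow μ (2 * n) 1) :=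
  (Equiv.mulLeft g⁻¹).hasSum_iff (f := fun x => convPow μ n x ^ 2) |>.mpr
    (hasSum_convPow_sq h hsymm n)

theorem convPow_mul_convPow_le (h : IsProb μ) (hsymm : MeasSymm μ) (m n : ℕ) :
    convPow μ m 1 * convPow μ n 1 ≤ convPow μ (m + n) 1 := by
  simpa using le_hasSum (hasSum_convPow_mul_convPow h hsymm m n 1) 1
    fun x _ => mul_nonneg (convPow_nonneg h m x) (convPow_nonneg h n _)

theorem convPow_two_mul_pos (h : IsProb μ) (hsymm : MeasSymm μ) (n : ℕ) :
    0 < convPow μ (2 * n) 1 := by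
  obtain ⟨x, hx⟩ : ∃ x, convPow μ n x ≠ 0 := by
    by_contra! hzero
    simpa [hzero] using (isProb_convPow h n).2
  rw [← (hasSum_convPow_sq h hsymm n).tsum_eq]
  exact (hasSum_convPow_sq h hsymm n).summable.tsum_pos (fun _ => sq_nonneg _) x (by positivity)

end Returns

section Contraction

variable {G : Type*} [Group G] {μ : G → ℝ}

theorem tsum_conv_sq_le (hμ : IsProb μ) {a : G → ℝ} (ha : Summable fun x => a x ^ 2) :
    ∑' y, conv a μ y ^ 2 ≤ ∑' x, a x ^ 2 := by
  have hconv := hasSum_conv (fun x => sq_nonneg (a x)) hμ.1 ha hμ.summable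
  rw [hμ.2, mul_one] at hconv
  have hpointwise : ∀ y, conv a μ y ^ 2 ≤ conv (fun x => a x ^ 2) μ y := fun y => by
    have hw := hμ.hasSum_inv_mul y
    have hcs := tsum_sq_le_tsum_mul_tsum_of_sq_le_mul (r := fun x => a x * μ (x⁻¹ * y))
      (fun x => mul_nonneg (sq_nonneg _) (hμ.1 _)) (fun x => hμ.1 _)
      (ha.mul_of_nonneg_of_le_one (fun x => sq_nonneg _) (fun x => hμ.1 _) fun x => hμ.le_one _)
      hw.summable fun x => le_of_eq (by ring)
    rw [hw.tsum_eq, mul_one] at hcs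
    exact hcs
  rw [← hconv.tsum_eq]
  exact (hconv.summable.of_nonneg_of_le (fun y => sq_nonneg _) hpointwise).tsum_le_tsum
    hpointwise hconv.summable

theorem convPow_two_mul_antitone (h : IsProb μ) (hsymm : MeasSymm μ) :
    Antitone fun n => convPow μ (2 * n) 1 := by
  refine antitone_nat_of_succ_le fun n => ?_
  rw [← (hasSum_convPow_sq h hsymm n).tsum_eq, ← (hasSum_convPow_sq h hsymm (n + 1)).tsum_eq]
  exact tsum_conv_sq_le h (hasSum_convPow_sq h hsymm n).summable

theorem conv_ltrans (g : G) (f ν : G → ℝ) : conv (ltrans g f) ν = ltrans g (conv f ν) := by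
  funext y
  refine ((Equiv.mulLeft g).tsum_eq _).symm.trans (tsum_congr fun x => ?_)
  simp [ltrans, mul_assoc]

end Contraction

section TransDefect

variable {G : Type*} [Group G] {μ : G → ℝ}

/-- `‖g · μ^{*n} - μ^{*n}‖₂²`. -/
noncomputable def transDefect (μ : G → ℝ) (n : ℕ) (g : G) : ℝ :=
  ∑' x, (ltrans g (convPow μ n) x - convPow μ n x) ^ 2

theorem transDefect_nonneg (μ : G → ℝ) (n : ℕ) (g : G) : 0 ≤ transDefect μ n g :=
  tsum_nonneg fun _ => sq_nonneg _

theorem transDefect_convPow (h : IsProb μ) (k n : ℕ) (g : G) :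
    transDefect (convPow μ k) n g = transDefect μ (k * n) g := by
  simp only [transDefect, convPow_convPow h]

theorem summable_ltrans_sub_sq (h : IsProb μ) (hsymm : MeasSymm μ) (n : ℕ) (g : G) :
    Summable fun x => (ltrans g (convPow μ n) x - convPow μ n x) ^ 2 :=
  ((hasSum_ltrans_convPow_sq h hsymm n g).summable.add
    (hasSum_convPow_sq h hsymm n).summable).of_nonneg_of_le (fun _ => sq_nonneg _) fun x => by
    simp only [ltrans]
    nlinarith [mul_nonneg (convPow_nonneg h n (g⁻¹ * x)) (convPow_nonneg h n x)]

theorem transDefect_eq (h : IsProb μ) (hsymm : MeasSymm μ) (n : ℕ) (g : G) :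
    transDefect μ n g = 2 * (convPow μ (2 * n) 1 - convPow μ (2 * n) g) := by
  have hcross : HasSum (fun x => ltrans g (convPow μ n) x * convPow μ n x)
      (convPow μ (2 * n) g) := by
    rw [two_mul]
    exact (hasSum_convPow_mul_convPow h hsymm n n g).congr_fun fun x => mul_comm _ _
  have hexpand := ((hasSum_ltrans_convPow_sq h hsymm n g).add (hasSum_convPow_sq h hsymm n)).sub
    (hcross.mul_left 2)
  calc transDefect μ n g = ∑' x, (ltrans g (convPow μ n) x ^ 2 + convPow μ n x ^ 2 -
      2 * (ltrans g (convPow μ n) x * convPow μ n x)) := tsum_congr fun x => by ring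
    _ = 2 * (convPow μ (2 * n) 1 - convPow μ (2 * n) g) := by rw [hexpand.tsum_eq]; ring

theorem ltrans_convPow_succ_sub (h : IsProb μ) (n : ℕ) (g y : G) :
    ltrans g (convPow μ (n + 1)) y - convPow μ (n + 1) y =
      conv (fun x => ltrans g (convPow μ n) x - convPow μ n x) μ y := by
  have hs : ∀ f : G → ℝ, (∀ x, 0 ≤ f x) → (∀ x, f x ≤ 1) →
      Summable fun x => f x * μ (x⁻¹ * y) := fun f hf0 hf1 => by
    simpa only [mul_comm] using (h.hasSum_inv_mul y).summable.mul_of_nonneg_of_le_one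
      (fun _ => h.1 _) hf0 hf1
  rw [show convPow μ (n + 1) = conv (convPow μ n) μ from rfl, ← conv_ltrans]
  refine (Summable.tsum_sub (hs _ (fun _ => convPow_nonneg h n _) fun _ => convPow_le_one h n _)
    (hs _ (convPow_nonneg h n) (convPow_le_one h n))).symm.trans (tsum_congr fun x => ?_)
  simp only [ltrans]
  ring

theorem transDefect_antitone (h : IsProb μ) (hsymm : MeasSymm μ) (g : G) :
    Antitone fun n => transDefect μ n g := by
  refine antitone_nat_of_succ_le fun n => ?_
  simp only [transDefect, ltrans_convPow_succ_sub h]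
  exact tsum_conv_sq_le h (summable_ltrans_sub_sq h hsymm n g)

theorem convPow_two_mul_add_one_sub_sq_le (h : IsProb μ) (hsymm : MeasSymm μ) (n : ℕ) (g : G) :
    (convPow μ (2 * n + 1) g - convPow μ (2 * n + 1) 1) ^ 2 ≤
      convPow μ (2 * n) 1 * transDefect μ n g := by
  have hpair : ∀ g : G, HasSum (fun x => convPow μ (n + 1) x * convPow μ n (g⁻¹ * x))
      (convPow μ (2 * n + 1) g) := fun g => by
    simpa only [show n + 1 + n = 2 * n + 1 by ring] using
      hasSum_convPow_mul_convPow h hsymm (n + 1) n g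
  have hdiff := (hpair g).sub (hpair 1)
  simp only [inv_one, one_mul, ← mul_sub] at hdiff
  rw [← hdiff.tsum_eq]
  calc _ ≤ convPow μ (2 * (n + 1)) 1 * transDefect μ n g := by
        rw [← (hasSum_convPow_sq h hsymm (n + 1)).tsum_eq]
        exact tsum_sq_le_tsum_mul_tsum_of_sq_le_mul (fun _ => sq_nonneg _) (fun _ => sq_nonneg _)
          (hasSum_convPow_sq h hsymm _).summable (summable_ltrans_sub_sq h hsymm n g)
          fun x => (mul_pow _ _ _).le
    _ ≤ convPow μ (2 * n) 1 * transDefect μ n g :=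
        mul_le_mul_of_nonneg_right (convPow_two_mul_antitone h hsymm n.le_succ)
          (transDefect_nonneg μ n g)

end TransDefect

section Aperiodic

variable {G : Type*} [Group G] {μ : G → ℝ}

theorem IsAperiodic.exists_odd_convPow_pos (haper : IsAperiodic μ) :
    ∃ s, Odd s ∧ 0 < convPow μ s 1 := by
  by_contra! hodd
  have : (2 : ℕ) = 1 := haper 2 fun n _ hpos =>
    ((Nat.even_or_odd n).resolve_right fun hn => (hodd n hn).not_gt hpos).two_dvd
  omega

theorem exists_convPow_pos_of_parity (h : IsProb μ) (hsymm : MeasSymm μ)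
    (haper : IsAperiodic μ) (j : ℕ) : ∃ t, j ≤ t ∧ Even (t - j) ∧ 0 < convPow μ t 1 := by
  obtain ⟨i, rfl | rfl⟩ := Nat.even_or_odd' j
  · exact ⟨2 * i, le_rfl, by simp, convPow_two_mul_pos h hsymm i⟩
  · obtain ⟨s, ⟨a, rfl⟩, hs⟩ := haper.exists_odd_convPow_pos
    refine ⟨2 * a + 1 + 2 * i, by omega, ⟨a, by omega⟩, ?_⟩
    exact (mul_pos hs (convPow_two_mul_pos h hsymm i)).trans_le (convPow_mul_convPow_le h hsymm _ _)

theorem exists_eventually_mul_convPow_le (h : IsProb μ) (hsymm : MeasSymm μ)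
    (haper : IsAperiodic μ) (j : ℕ) :
    ∃ c, 0 < c ∧ ∀ᶠ n in atTop, c * convPow μ (2 * n) 1 ≤ convPow μ (2 * n + j) 1 := by
  obtain ⟨t, hjt, ⟨u, hu⟩, ht⟩ := exists_convPow_pos_of_parity h hsymm haper j
  refine ⟨convPow μ t 1, ht, eventually_atTop.2 ⟨u, fun n hn => ?_⟩⟩
  calc convPow μ t 1 * convPow μ (2 * n) 1 ≤ convPow μ t 1 * convPow μ (2 * (n - u)) 1 :=
        mul_le_mul_of_nonneg_left (convPow_two_mul_antitone h hsymm (n.sub_le u)) ht.le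
    _ ≤ convPow μ (t + 2 * (n - u)) 1 := convPow_mul_convPow_le h hsymm _ _
    _ = convPow μ (2 * n + j) 1 := by congr 1; omega

end Aperiodic

theorem tendsto_atTop_of_even_of_odd {α : Type*} {f : ℕ → α} {l : Filter α}
    (heven : Tendsto (fun n => f (2 * n)) atTop l)
    (hodd : Tendsto (fun n => f (2 * n + 1)) atTop l) : Tendsto f atTop l := by
  intro s hs
  obtain ⟨N₁, h₁⟩ := eventually_atTop.1 (heven hs)
  obtain ⟨N₂, h₂⟩ := eventually_atTop.1 (hodd hs)
  refine eventually_atTop.2 ⟨2 * (N₁ + N₂), fun n hn => ?_⟩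
  obtain ⟨m, rfl | rfl⟩ := Nat.even_or_odd' n
  · exact h₁ m (by omega)
  · exact h₂ m (by omega)

theorem tendsto_div_of_sq_sub_le_mul {x D E Q : ℕ → ℝ} {c : ℝ} (hc : 0 < c)
    (hE : ∀ n, 0 < E n) (hD : ∀ᶠ n in atTop, c * E n ≤ D n)
    (hxD : ∀ n, (x n - D n) ^ 2 ≤ E n * Q n) (hQ : Tendsto (fun n => Q n / E n) atTop (𝓝 0)) :
    Tendsto (fun n => x n / D n) atTop (𝓝 1) := by
  have hbound : ∀ᶠ n in atTop, ‖x n / D n - 1‖ ≤ √(Q n / E n / c ^ 2) := hD.mono fun n hn => by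
    have hDpos : 0 < D n := (mul_pos hc (hE n)).trans_le hn
    have hQn : 0 ≤ Q n / E n / c ^ 2 :=
      div_nonneg (div_nonneg ((mul_nonneg_iff_of_pos_left (hE n)).mp
        ((sq_nonneg _).trans (hxD n))) (hE n).le) (sq_nonneg c)
    rw [Real.norm_eq_abs, ← Real.sqrt_sq_eq_abs, div_sub_one hDpos.ne', div_pow]
    refine Real.sqrt_le_sqrt ((div_le_iff₀ (by positivity)).2 ?_)
    calc (x n - D n) ^ 2 ≤ E n * Q n := hxD n
      _ = Q n / E n / c ^ 2 * (c * E n) ^ 2 := by field_simp [(hE n).ne']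
      _ ≤ Q n / E n / c ^ 2 * D n ^ 2 := by gcongr; exact (mul_pos hc (hE n)).le
  rw [tendsto_iff_norm_sub_tendsto_zero]
  refine squeeze_zero' (Eventually.of_forall fun _ => norm_nonneg _) hbound ?_
  simpa using ((hQ.div_const (c ^ 2)).sqrt)

theorem tendsto_div_of_tendsto_comp_mul {Q E : ℕ → ℝ} {c : ℝ} {k : ℕ} (hk : 0 < k)
    (hQ0 : ∀ n, 0 ≤ Q n) (hQ : Antitone Q) (hE : ∀ n, 0 < E n) (hc : 0 < c) (hc1 : c ≤ 1)
    (hEc : ∀ n, c * E n ≤ E (n + 1))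
    (h : Tendsto (fun n => Q (k * n) / E (k * n)) atTop (𝓝 0)) :
    Tendsto (fun n => Q n / E n) atTop (𝓝 0) := by
  have hgrow : ∀ n j, c ^ j * E n ≤ E (n + j) := fun n j => by
    induction j with
    | zero => simp
    | succ j ih =>
      calc c ^ (j + 1) * E n = c * (c ^ j * E n) := by ring
        _ ≤ c * E (n + j) := mul_le_mul_of_nonneg_left ih hc.le
        _ ≤ E (n + (j + 1)) := hEc _
  have hbound : ∀ m, Q m / E m ≤ (c ^ k)⁻¹ * (Q (k * (m / k)) / E (k * (m / k))) := fun m => by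
    set n := k * (m / k)
    have hmn : m = n + m % k := (Nat.div_add_mod m k).symm
    have hEm : c ^ k * E n ≤ E m := calc
      c ^ k * E n ≤ c ^ (m % k) * E n := mul_le_mul_of_nonneg_right
          (pow_le_pow_of_le_one hc.le hc1 (Nat.mod_lt m hk).le) (hE n).le
      _ ≤ E (n + m % k) := hgrow n _
      _ = E m := by rw [← hmn]
    calc Q m / E m ≤ Q n / (c ^ k * E n) :=
          div_le_div₀ (hQ0 n) (hQ (hmn ▸ Nat.le_add_right n _)) (by positivity [hE n]) hEm
      _ = (c ^ k)⁻¹ * (Q n / E n) := by rw [div_mul_eq_div_div_swap, div_eq_inv_mul]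
  refine squeeze_zero (fun m => div_nonneg (hQ0 m) (hE m).le) hbound ?_
  simpa using (h.comp (Nat.tendsto_div_const_atTop hk.ne')).const_mul (c ^ k)⁻¹

theorem amu_eq_setOf_tendsto_transDefect {G : Type*} [Group G] {μ : G → ℝ} (h : IsProb μ)
    (hsymm : MeasSymm μ)
    (hodd : ∃ c, 0 < c ∧ ∀ᶠ n in atTop, c * convPow μ (2 * n) 1 ≤ convPow μ (2 * n + 1) 1) :
    Amu μ = {g | Tendsto (fun n => transDefect μ n g / convPow μ (2 * n) 1) atTop (𝓝 0)} := by
  obtain ⟨c, hc, hodd⟩ := hodd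
  ext g
  have hdefect : ∀ n, transDefect μ n g / convPow μ (2 * n) 1 =
      2 * (1 - convPow μ (2 * n) g / convPow μ (2 * n) 1) := fun n => by
    rw [transDefect_eq h hsymm, mul_div_assoc, sub_div,
      div_self (convPow_two_mul_pos h hsymm n).ne']
  simp only [Amu, Set.mem_ofPred_eq, hdefect]
  constructor
  · intro hg
    simpa using ((hg.comp (tendsto_id.const_mul_atTop' two_pos)).const_sub 1).const_mul 2
  · intro hq
    refine tendsto_atTop_of_even_of_odd ?_ (tendsto_div_of_sq_sub_le_mul hc
      (convPow_two_mul_pos h hsymm) hodd (convPow_two_mul_add_one_sub_sq_le h hsymm · g) ?_)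
    · simpa using (hq.div_const 2).const_sub 1
    · simpa only [hdefect] using hq

theorem stmt4_general {G : Type*} [Group G] (μ : G → ℝ)
    (hprob : IsProb μ) (hsymm : MeasSymm μ) (haper : IsAperiodic μ) :
    ∀ k : ℕ, 1 ≤ k → Amu μ = Amu (convPow μ k) := by
  intro k hk
  have hmul : Tendsto (k * ·) atTop atTop := tendsto_id.const_mul_atTop' hk
  obtain ⟨c, hc, hck⟩ := exists_eventually_mul_convPow_le hprob hsymm haper k
  have hoddk : ∃ c, 0 < c ∧ ∀ᶠ n in atTop,
      c * convPow (convPow μ k) (2 * n) 1 ≤ convPow (convPow μ k) (2 * n + 1) 1 :=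
    ⟨c, hc, (hmul.eventually hck).mono fun n hn => by
      simpa only [convPow_convPow hprob, mul_add, mul_one, mul_left_comm k 2] using hn⟩
  rw [amu_eq_setOf_tendsto_transDefect hprob hsymm
      (exists_eventually_mul_convPow_le hprob hsymm haper 1),
    amu_eq_setOf_tendsto_transDefect (isProb_convPow hprob k) (measSymm_convPow hprob hsymm k)
      hoddk]
  have hgrow (n : ℕ) : convPow μ (2 * 1) 1 * convPow μ (2 * n) 1 ≤ convPow μ (2 * (n + 1)) 1 := by
    simpa only [mul_add, add_comm] using convPow_mul_convPow_le hprob hsymm (2 * 1) (2 * n)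
  ext g
  simp only [Set.mem_ofPred_eq, transDefect_convPow hprob, convPow_convPow hprob,
    mul_left_comm k 2]
  exact ⟨fun hg => hg.comp hmul, tendsto_div_of_tendsto_comp_mul hk (transDefect_nonneg μ · g)
    (transDefect_antitone hprob hsymm g) (convPow_two_mul_pos hprob hsymm)
    (convPow_two_mul_pos hprob hsymm 1) (convPow_le_one hprob _ 1) hgrow⟩

theorem stmt4 {G : Type*} [Group G] [Group.FG G] (μ : G → ℝ)
    (hprob : IsProb μ) (hsymm : MeasSymm μ) (haper : IsAperiodic μ)
    (hgen : GeneratingSupport μ) :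
    ∀ k : ℕ, 1 ≤ k → Amu μ = Amu (convPow μ k) :=
  stmt4_general μ hprob hsymm haper
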